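/- arXiv:1604.01902 — 2 statements merged into one kernel-verified Lean document; each statement's English description precedes it below -/
import Mathlib

section
/- Let E/F be an unramified quadratic field extension. The group 𝒪_r^× acts on 𝒪_r^{(n)} by multiplication, and the number of orbits |𝒪_r^× \ 𝒪_r^{(n)}| equals: 0 if n is odd or n > 2r; 1 if n = 0; q^r if n = 2r; and q^{n/2}(1 − q^{−1}) if n is even and 0 < n < 2r. -/
/-! Setup: `F` nonarchimedean local field with ring of integers `𝔬` (a DVR `o`),
uniformizer `ϖ`, and finite residue field `𝔬/𝔭` of cardinality `q`; `E/F` a quadratic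
field extension with ring of integers `𝒪` (a DVR `O`), inclusion `f : 𝔬 → 𝒪`;
`β ∈ 𝒪 ∖ 𝔬` with `𝒪 = 𝔬 + β𝔬` and `Nr(β) ∈ 𝔬^×`, the norm `Nr` pinned down by the
involutive conjugation `σ` via `f (Nr z) = z · σ z`.  `𝒪_r = 𝔬 + ϖ^rβ𝔬`,
`𝒪_r^{(n)} = {t ∈ 𝒪_r ∖ ϖ𝒪_r : Nr(t) ∈ ϖⁿ𝔬^×}`; the group `𝒪_r^×` acts on
`𝒪_r^{(n)}` by multiplication, and `|𝒪_r^× \ 𝒪_r^{(n)}|` denotes the number of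
orbits.  `E/F` unramified means `f ϖ` is irreducible in `𝒪`. -/

/-- The order `𝒪_r = 𝔬 + ϖ^rβ𝔬` of conductor `r`. -/
def ordSet {o O : Type*} [CommRing o] [CommRing O] (f : o →+* O) (ϖ : o) (β : O)
    (r : ℕ) : Set O :=
  {z | ∃ x y : o, z = f x + f (ϖ ^ r * y) * β}

/-- The unit group `𝒪_r^×` of the order `𝒪_r` (as a subset of `𝒪`). -/
def ordUnits {o O : Type*} [CommRing o] [CommRing O] (f : o →+* O) (ϖ : o) (β : O)
    (r : ℕ) : Set O :=
  {z | z ∈ ordSet f ϖ β r ∧ ∃ w ∈ ordSet f ϖ β r, z * w = 1}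

/-- The set `𝒪_r^{(n)} = {t ∈ 𝒪_r ∖ ϖ𝒪_r : Nr(t) ∈ ϖⁿ𝔬^×}`. -/
def ordLayer {o O : Type*} [CommRing o] [CommRing O] (f : o →+* O) (ϖ : o) (β : O)
    (Nr : O →* o) (r n : ℕ) : Set O :=
  {z | z ∈ ordSet f ϖ β r ∧ (¬ ∃ s ∈ ordSet f ϖ β r, z = f ϖ * s) ∧
    ∃ u : oˣ, Nr z = ϖ ^ n * u}

/-- The number of orbits `|𝒪_r^× \ 𝒪_r^{(n)}|` for the multiplication action of
`𝒪_r^×` on `𝒪_r^{(n)}`. -/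
noncomputable def ordLayerOrbits {o O : Type*} [CommRing o] [CommRing O]
    (f : o →+* O) (ϖ : o) (β : O) (Nr : O →* o) (r n : ℕ) : ℕ :=
  Nat.card (Quot (fun t t' : ordLayer f ϖ β Nr r n =>
    ∃ u ∈ ordUnits f ϖ β r, u * (t : O) = t'))

/-!
Since `E/F` is unramified, `f ϖ` is a uniformizer of `𝒪` with norm `ϖ ^ 2`, so `Nr z` has
valuation `2 v_𝒪(z)`. For a primitive `z = a + ϖ^r b β ∈ 𝒪_r` this forces `n = 2m` with `m ≤ r`,
`a = ϖ^m a₀`, `b` a unit if `m > 0` and `a₀` a unit if `m < r`. Two such elements lie in one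
`𝒪_r^×`-orbit iff `z' / z = z' σ(z) / Nr z` lies in `𝒪_r`; expanding with `σ β = Tr β - β` this
is `ϖ^m ∣ a₀ b' - a₀' b`. So for `m > 0` the orbits are classified by `a₀ / b mod ϖ^m`, a unit of
`𝔬/ϖ^m` when `m < r` and arbitrary when `m = r`; for `m = 0` every element is a unit of `𝒪_r`,
and there is a single orbit.
-/

open Function

section DVRQuotient

variable {R : Type*} [CommRing R] [IsDomain R]

lemma card_quotient_span_pow {a : R} (ha : a ≠ 0) (k : ℕ) :
    Nat.card (R ⧸ Ideal.span {a ^ k}) = Nat.card (R ⧸ Ideal.span {a}) ^ k := by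
  change (Ideal.span {a ^ k}).toAddSubgroup.index = (Ideal.span {a}).toAddSubgroup.index ^ k
  induction k with
  | zero => simp
  | succ k ih =>
    have hle : (Ideal.span {a ^ (k + 1)}).toAddSubgroup ≤ (Ideal.span {a ^ k}).toAddSubgroup :=
      Ideal.span_singleton_le_span_singleton.mpr (pow_dvd_pow a k.le_succ)
    have hrange : (AddMonoidHom.mulLeft (a ^ k)).range = (Ideal.span {a ^ k}).toAddSubgroup := by
      ext x
      simp [Ideal.mem_span_singleton, dvd_iff_exists_eq_mul_right, eq_comm]
    have hcomap : (Ideal.span {a ^ (k + 1)}).toAddSubgroup.comap (AddMonoidHom.mulLeft (a ^ k))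
        = (Ideal.span {a}).toAddSubgroup := by
      ext x
      simp [Ideal.mem_span_singleton, pow_succ, mul_dvd_mul_iff_left (pow_ne_zero k ha)]
    rw [← AddSubgroup.relIndex_mul_index hle, ih, ← hrange, ← AddSubgroup.index_comap, hcomap,
      pow_succ, mul_comm]

variable [IsDiscreteValuationRing R] {ϖ : R}

lemma Irreducible.dvd_iff_not_isUnit (hϖ : Irreducible ϖ) {x : R} : ϖ ∣ x ↔ ¬ IsUnit x := by
  rw [← Ideal.mem_span_singleton, ← hϖ.maximalIdeal_eq, IsLocalRing.mem_maximalIdeal,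
    mem_nonunits_iff]

lemma isLocalHom_of_not_isUnit_map {S : Type*} [CommRing S] (hϖ : Irreducible ϖ) {g : R →+* S}
    (hg : ¬ IsUnit (g ϖ)) : IsLocalHom g := by
  refine ⟨fun x hx => ?_⟩
  by_contra hnx
  obtain ⟨c, rfl⟩ := hϖ.dvd_iff_not_isUnit.mpr hnx
  rw [map_mul] at hx
  exact hg (isUnit_of_mul_isUnit_left hx)

lemma isLocalHom_mk_span_pow (hϖ : Irreducible ϖ) {m : ℕ} (hm : 0 < m) :
    IsLocalHom (Ideal.Quotient.mk (Ideal.span {ϖ ^ m})) := by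
  have : Nontrivial (R ⧸ Ideal.span {ϖ ^ m}) := Ideal.Quotient.nontrivial_iff.mpr (by
    rw [Ne, Ideal.span_singleton_eq_top]
    exact fun h => hϖ.not_isUnit (isUnit_of_dvd_unit (dvd_pow_self ϖ hm.ne') h))
  refine isLocalHom_of_not_isUnit_map hϖ fun h => (h.pow m).ne_zero ?_
  rw [← map_pow, Ideal.Quotient.eq_zero_iff_mem]
  exact Ideal.mem_span_singleton_self _

lemma card_nonunits_quotient_span_pow (hϖ : Irreducible ϖ) [Finite (R ⧸ Ideal.span {ϖ})]
    {m : ℕ} (hm : 0 < m) :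
    Nat.card {x : R ⧸ Ideal.span {ϖ ^ m} // ¬ IsUnit x}
      = Nat.card (R ⧸ Ideal.span {ϖ}) ^ (m - 1) := by
  have := isLocalHom_mk_span_pow hϖ hm
  let mk := (Ideal.Quotient.mk (Ideal.span {ϖ ^ m})).toAddMonoidHom
  have hnonunits (x) : ¬ IsUnit x ↔ x ∈ (Ideal.span {ϖ}).toAddSubgroup.map mk := by
    obtain ⟨c, rfl⟩ := Ideal.Quotient.mk_surjective x
    refine ⟨fun hc => ⟨c, ?_, rfl⟩, fun ⟨c', hc', hcc'⟩ => ?_⟩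
    · rwa [isUnit_map_iff, ← hϖ.dvd_iff_not_isUnit, ← Ideal.mem_span_singleton] at hc
    · rw [← hcc']
      change ¬ IsUnit (Ideal.Quotient.mk (Ideal.span {ϖ ^ m}) c')
      rw [isUnit_map_iff, ← hϖ.dvd_iff_not_isUnit]
      exact Ideal.mem_span_singleton.mp hc'
  have hker : mk.ker = (Ideal.span {ϖ ^ m}).toAddSubgroup := by
    ext x
    simp [mk, Ideal.Quotient.eq_zero_iff_mem]
  have h := AddSubgroup.relIndex_mul_index (H := (Ideal.span {ϖ ^ m}).toAddSubgroup)
    (K := (Ideal.span {ϖ}).toAddSubgroup)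
    (Ideal.span_singleton_le_span_singleton.mpr (dvd_pow_self ϖ hm.ne'))
  change _ * Nat.card (R ⧸ Ideal.span {ϖ}) = Nat.card (R ⧸ Ideal.span {ϖ ^ m}) at h
  rw [← hker, AddSubgroup.relIndex_ker, card_quotient_span_pow hϖ.ne_zero,
    ← pow_sub_one_mul hm.ne' (Nat.card (R ⧸ Ideal.span {ϖ}))] at h
  rw [Nat.card_congr (Equiv.subtypeEquivRight hnonunits)]
  exact Nat.eq_of_mul_eq_mul_right Nat.card_pos h

lemma card_units_quotient_span_pow (hϖ : Irreducible ϖ) [Finite (R ⧸ Ideal.span {ϖ})] {m : ℕ}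
    (hm : 0 < m) :
    Nat.card {x : R ⧸ Ideal.span {ϖ ^ m} // IsUnit x}
      = Nat.card (R ⧸ Ideal.span {ϖ}) ^ m - Nat.card (R ⧸ Ideal.span {ϖ}) ^ (m - 1) := by
  classical
  have hcard := card_quotient_span_pow hϖ.ne_zero m
  have : Finite (R ⧸ Ideal.span {ϖ ^ m}) :=
    Nat.finite_of_card_ne_zero (by rw [hcard]; exact pow_ne_zero m Nat.card_pos.ne')
  rw [← hcard, ← card_nonunits_quotient_span_pow hϖ hm,
    ← Nat.card_congr (Equiv.sumCompl fun x : R ⧸ Ideal.span {ϖ ^ m} => IsUnit x), Nat.card_sum,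
    Nat.add_sub_cancel]

end DVRQuotient

section Coordinates

variable {o O : Type*} [CommRing o] [IsDomain o] [ValuationRing o] [CommRing O] [IsDomain O]
  {f : o →+* O} {β : O} [IsLocalHom f]

lemma map_add_map_mul_eq_zero_iff (hf : Injective f) (hβ : β ∉ Set.range f) {x y : o} :
    f x + f y * β = 0 ↔ x = 0 ∧ y = 0 := by
  refine ⟨fun h => ?_, by rintro ⟨rfl, rfl⟩; simp⟩
  by_contra hxy
  apply hβ
  rcases ValuationRing.dvd_total y x with ⟨c, rfl⟩ | ⟨c, rfl⟩
  · have hy : f y ≠ 0 := fun hy => hxy (by simp [(map_eq_zero_iff f hf).mp hy])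
    have hc : f y * (f c + β) = 0 := by rw [← h, map_mul]; ring
    exact ⟨-c, by linear_combination (map_neg f c) - (mul_eq_zero.mp hc).resolve_left hy⟩
  · have hx : f x ≠ 0 := fun hx => hxy (by simp [(map_eq_zero_iff f hf).mp hx])
    have h1 : 1 + f c * β = 0 := (mul_eq_zero.mp (by rw [← h, map_mul]; ring)).resolve_left hx
    -- `1 + c β = 0` makes `f c` a unit, hence `c` too, and then `β = -c⁻¹`
    have hc : IsUnit c :=
      (isUnit_map_iff f c).mp (IsUnit.of_mul_eq_one (-β) (by linear_combination -h1))
    have hcc : f c * f (hc.unit⁻¹ : oˣ) = 1 := by rw [← map_mul, hc.mul_val_inv, map_one]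
    exact ⟨-((hc.unit⁻¹ : oˣ) : o), by
      rw [map_neg]; linear_combination -f (hc.unit⁻¹ : oˣ) * h1 + β * hcc⟩

lemma map_add_map_mul_inj (hf : Injective f) (hβ : β ∉ Set.range f) {x y x' y' : o} :
    f x + f y * β = f x' + f y' * β ↔ x = x' ∧ y = y' := by
  have h : f x + f y * β - (f x' + f y' * β) = f (x - x') + f (y - y') * β := by
    simp only [map_sub]; ring
  rw [← sub_eq_zero, h, map_add_map_mul_eq_zero_iff hf hβ, sub_eq_zero, sub_eq_zero]

lemma map_dvd_map_add_map_mul_iff (hf : Injective f) (hβ : β ∉ Set.range f)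
    (hgen : ∀ z : O, ∃ x y : o, z = f x + f y * β) {c x y : o} :
    f c ∣ f x + f y * β ↔ c ∣ x ∧ c ∣ y := by
  constructor
  · rintro ⟨w, hw⟩
    obtain ⟨x', y', rfl⟩ := hgen w
    have h : f x + f y * β = f (c * x') + f (c * y') * β := by rw [hw, map_mul, map_mul]; ring
    obtain ⟨rfl, rfl⟩ := (map_add_map_mul_inj hf hβ).mp h
    exact ⟨dvd_mul_right c x', dvd_mul_right c y'⟩
  · rintro ⟨⟨x', rfl⟩, ⟨y', rfl⟩⟩
    exact ⟨f x' + f y' * β, by simp only [map_mul]; ring⟩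

lemma isUnit_map_add_map_mul_iff [IsDiscreteValuationRing O] (hf : Injective f)
    (hβ : β ∉ Set.range f) (hgen : ∀ z : O, ∃ x y : o, z = f x + f y * β) {ϖ : o}
    (hunram : Irreducible (f ϖ)) {x y : o} :
    IsUnit (f x + f y * β) ↔ ¬ (ϖ ∣ x ∧ ϖ ∣ y) := by
  rw [← map_dvd_map_add_map_mul_iff hf hβ hgen, hunram.dvd_iff_not_isUnit, not_not]

end Coordinates

section Order

variable {o O : Type*} [CommRing o] [CommRing O] {f : o →+* O} {ϖ : o} {β : O} {r : ℕ}

lemma mem_ordSet_iff (hgen : ∀ z : O, ∃ x y : o, z = f x + f y * β) {z : O} :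
    z ∈ ordSet f ϖ β r ↔ ∃ x w, z = f x + f (ϖ ^ r) * w := by
  constructor
  · rintro ⟨x, y, rfl⟩
    exact ⟨x, f y * β, by rw [map_mul]; ring⟩
  · rintro ⟨x, w, rfl⟩
    obtain ⟨p, q, rfl⟩ := hgen w
    exact ⟨x + ϖ ^ r * p, q, by simp only [map_add, map_mul]; ring⟩

lemma map_mem_ordSet (x : o) : f x ∈ ordSet f ϖ β r := ⟨x, 0, by simp⟩

lemma one_mem_ordSet : (1 : O) ∈ ordSet f ϖ β r := by simpa using map_mem_ordSet (f := f) 1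

lemma mul_mem_ordSet (hgen : ∀ z : O, ∃ x y : o, z = f x + f y * β) {z z' : O}
    (hz : z ∈ ordSet f ϖ β r) (hz' : z' ∈ ordSet f ϖ β r) : z * z' ∈ ordSet f ϖ β r := by
  obtain ⟨x, w, rfl⟩ := (mem_ordSet_iff hgen).mp hz
  obtain ⟨x', w', rfl⟩ := (mem_ordSet_iff hgen).mp hz'
  exact (mem_ordSet_iff hgen).mpr
    ⟨x * x', f x * w' + w * f x' + f (ϖ ^ r) * w * w', by rw [map_mul]; ring⟩

lemma conj_mem_ordSet (hgen : ∀ z : O, ∃ x y : o, z = f x + f y * β) {σ : O →+* O}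
    (hσf : ∀ x : o, σ (f x) = f x) {z : O} (hz : z ∈ ordSet f ϖ β r) :
    σ z ∈ ordSet f ϖ β r := by
  obtain ⟨x, w, rfl⟩ := (mem_ordSet_iff hgen).mp hz
  exact (mem_ordSet_iff hgen).mpr ⟨x, σ w, by rw [map_add, map_mul, hσf, hσf]⟩

lemma ordUnits_mul_equivalence (hgen : ∀ z : O, ∃ x y : o, z = f x + f y * β) (s : Set O) :
    Equivalence fun t t' : s => ∃ u ∈ ordUnits f ϖ β r, u * t = t' := by
  refine ⟨fun t => ⟨1, ⟨one_mem_ordSet, 1, one_mem_ordSet, mul_one 1⟩, one_mul _⟩, ?_, ?_⟩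
  · rintro t t' ⟨u, ⟨hu, v, hv, huv⟩, hut⟩
    exact ⟨v, ⟨hv, u, hu, by rw [mul_comm, huv]⟩, by linear_combination (t : O) * huv - v * hut⟩
  · rintro t t' t'' ⟨u, ⟨hu, v, hv, huv⟩, hut⟩ ⟨u', ⟨hu', v', hv', huv'⟩, hut'⟩
    refine ⟨u' * u, ⟨mul_mem_ordSet hgen hu' hu, v * v', mul_mem_ordSet hgen hv hv', ?_⟩, ?_⟩
    · linear_combination (u' * v') * huv + huv'
    · linear_combination u' * hut + hut'

variable [IsDomain o] [ValuationRing o] [IsDomain O] [IsLocalHom f]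

lemma map_add_map_mul_mem_ordSet_iff (hf : Injective f) (hβ : β ∉ Set.range f) {x y : o} :
    f x + f y * β ∈ ordSet f ϖ β r ↔ ϖ ^ r ∣ y := by
  constructor
  · rintro ⟨a, b, h⟩
    exact ⟨b, ((map_add_map_mul_inj hf hβ).mp h).2⟩
  · rintro ⟨b, rfl⟩
    exact ⟨x, b, rfl⟩

lemma exists_mem_ordSet_eq_map_mul_iff (hf : Injective f) (hβ : β ∉ Set.range f)
    (hϖ : ϖ ≠ 0) {a b : o} :
    (∃ s ∈ ordSet f ϖ β r, f a + f (ϖ ^ r * b) * β = f ϖ * s) ↔ ϖ ∣ a ∧ ϖ ∣ b := by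
  constructor
  · rintro ⟨s, ⟨x, y, rfl⟩, h⟩
    have h' : f a + f (ϖ ^ r * b) * β = f (ϖ * x) + f (ϖ ^ r * (ϖ * y)) * β := by
      rw [h]; simp only [map_mul]; ring
    obtain ⟨rfl, hb⟩ := (map_add_map_mul_inj hf hβ).mp h'
    exact ⟨dvd_mul_right ϖ x, ⟨y, mul_left_cancel₀ (pow_ne_zero r hϖ) hb⟩⟩
  · rintro ⟨⟨x, rfl⟩, ⟨y, rfl⟩⟩
    exact ⟨f x + f (ϖ ^ r * y) * β, ⟨x, y, rfl⟩, by simp only [map_mul]; ring⟩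

end Order

section Norm

variable {o O : Type*} [CommRing o] [CommRing O] {f : o →+* O} {β : O} {σ : O →+* O}
  {Nr : O →* o}

lemma norm_map_eq_sq (hf : Injective f) (hσf : ∀ x : o, σ (f x) = f x)
    (hNr : ∀ z : O, f (Nr z) = z * σ z) (x : o) : Nr (f x) = x ^ 2 :=
  hf (by rw [hNr, hσf, map_pow, sq])

lemma isUnit_norm_iff [IsLocalHom f] (hNr : ∀ z : O, f (Nr z) = z * σ z) {z : O} :
    IsUnit (Nr z) ↔ IsUnit z := by
  rw [← isUnit_map_iff f, hNr]
  exact ⟨isUnit_of_mul_isUnit_left, fun h => h.mul (h.map σ)⟩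

lemma conj_eq_trace_sub (hNr : ∀ z : O, f (Nr z) = z * σ z) :
    σ β = f (Nr (1 + β) - 1 - Nr β) - β := by
  simp only [map_sub, map_one, hNr, map_add]
  ring

lemma mul_conj_map_add_map_mul (hσf : ∀ x : o, σ (f x) = f x)
    (hNr : ∀ z : O, f (Nr z) = z * σ z) {T : o} (hT : σ β = f T - β) (a b a' b' : o) :
    (f a' + f b' * β) * σ (f a + f b * β)
      = f (a * a' + a' * b * T + b * b' * Nr β) + f (a * b' - a' * b) * β := by
  have hβ2 : β * β = f T * β - f (Nr β) := by rw [hNr, hT]; ring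
  rw [map_add, map_mul, hσf, hσf, hT]
  simp only [map_add, map_sub, map_mul]
  linear_combination (-(f b' * f b)) * hβ2

lemma mem_ordUnits_of_isUnit_norm (hgen : ∀ z : O, ∃ x y : o, z = f x + f y * β)
    (hσf : ∀ x : o, σ (f x) = f x) (hNr : ∀ z : O, f (Nr z) = z * σ z) {ϖ : o} {r : ℕ} {z : O}
    (hz : z ∈ ordSet f ϖ β r) (hu : IsUnit (Nr z)) : z ∈ ordUnits f ϖ β r := by
  refine ⟨hz, f (hu.unit⁻¹ : oˣ) * σ z,
    mul_mem_ordSet hgen (map_mem_ordSet _) (conj_mem_ordSet hgen hσf hz), ?_⟩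
  rw [mul_left_comm, ← hNr, ← map_mul, hu.val_inv_mul, map_one]

end Norm

section Orbits

variable {o O : Type*} [CommRing o] [IsDomain o] [CommRing O] [IsDomain O] {f : o →+* O}
  {ϖ : o} {β : O} {σ : O →+* O} {Nr : O →* o} {r : ℕ}

/-- The only candidate for the unit is `u = z' σ(z) / Nr z`. -/
lemma exists_ordUnits_mul_eq_iff (hf : Injective f)
    (hgen : ∀ z : O, ∃ x y : o, z = f x + f y * β) (hσf : ∀ x : o, σ (f x) = f x)
    (hNr : ∀ z : O, f (Nr z) = z * σ z) (hϖ : ϖ ≠ 0) {z z' : O} {n : ℕ} {w w' : oˣ}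
    (hw : Nr z = ϖ ^ n * w) (hw' : Nr z' = ϖ ^ n * w') :
    (∃ u ∈ ordUnits f ϖ β r, u * z = z') ↔ ∃ s ∈ ordSet f ϖ β r, z' * σ z = f (ϖ ^ n) * s := by
  constructor
  · rintro ⟨u, ⟨hu, -⟩, rfl⟩
    refine ⟨f w * u, mul_mem_ordSet hgen (map_mem_ordSet _) hu, ?_⟩
    rw [mul_assoc, ← hNr, hw, map_mul]
    ring
  · rintro ⟨s, hs, hzs⟩
    have hϖn : f (ϖ ^ n) ≠ 0 := (map_ne_zero_iff f hf).mpr (pow_ne_zero n hϖ)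
    have hww : f (w : o) * f (w⁻¹ : oˣ) = 1 := by rw [← map_mul, Units.mul_inv, map_one]
    have hz : f (ϖ ^ n) * (f (w⁻¹ : oˣ) * s * z) = f (ϖ ^ n) * z' := by
      have hNz : z * σ z = f (ϖ ^ n) * f w := by rw [← hNr, hw, map_mul]
      linear_combination -f (w⁻¹ : oˣ) * z * hzs + f (w⁻¹ : oˣ) * z' * hNz
        + f (ϖ ^ n) * z' * hww
    have hu := mul_left_cancel₀ hϖn hz
    refine ⟨_, mem_ordUnits_of_isUnit_norm hgen hσf hNr
      (mul_mem_ordSet hgen (map_mem_ordSet _) hs) ?_, hu⟩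
    have hN : ϖ ^ n * (Nr (f (w⁻¹ : oˣ) * s) * w) = ϖ ^ n * w' := by
      rw [← hw', ← hu, map_mul Nr _ z, hw]
      ring
    exact isUnit_of_mul_isUnit_left ((mul_left_cancel₀ (pow_ne_zero n hϖ) hN) ▸ w'.isUnit)

lemma exists_ordUnits_mul_eq_iff_dvd [ValuationRing o] [IsLocalHom f] (hf : Injective f)
    (hβ : β ∉ Set.range f) (hgen : ∀ z : O, ∃ x y : o, z = f x + f y * β)
    (hσf : ∀ x : o, σ (f x) = f x) (hNr : ∀ z : O, f (Nr z) = z * σ z) (hϖ : ϖ ≠ 0) {m : ℕ}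
    (hmr : m ≤ r) {a b a' b' : o} {w w' : oˣ}
    (hw : Nr (f (ϖ ^ m * a) + f (ϖ ^ r * b) * β) = ϖ ^ (2 * m) * w)
    (hw' : Nr (f (ϖ ^ m * a') + f (ϖ ^ r * b') * β) = ϖ ^ (2 * m) * w') :
    (∃ u ∈ ordUnits f ϖ β r,
        u * (f (ϖ ^ m * a) + f (ϖ ^ r * b) * β) = f (ϖ ^ m * a') + f (ϖ ^ r * b') * β)
      ↔ ϖ ^ m ∣ a * b' - a' * b := by
  obtain ⟨d, rfl⟩ := Nat.exists_eq_add_of_le hmr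
  obtain ⟨T, hT⟩ : ∃ T, σ β = f T - β := ⟨_, conj_eq_trace_sub hNr⟩
  have hprod : (f (ϖ ^ m * a') + f (ϖ ^ (m + d) * b') * β)
        * σ (f (ϖ ^ m * a) + f (ϖ ^ (m + d) * b) * β)
      = f (ϖ ^ (2 * m)) * (f (a * a' + ϖ ^ d * a' * b * T + ϖ ^ (2 * d) * b * b' * Nr β)
        + f (ϖ ^ d * (a * b' - a' * b)) * β) := by
    rw [mul_conj_map_add_map_mul hσf hNr hT]
    simp only [map_add, map_sub, map_mul, map_pow]
    ring
  rw [exists_ordUnits_mul_eq_iff hf hgen hσf hNr hϖ hw hw', hprod]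
  have hcancel : ∀ y : O, (∃ s ∈ ordSet f ϖ β (m + d), f (ϖ ^ (2 * m)) * y = f (ϖ ^ (2 * m)) * s)
      ↔ y ∈ ordSet f ϖ β (m + d) := fun y =>
    ⟨fun ⟨s, hs, h⟩ => mul_left_cancel₀ ((map_ne_zero_iff f hf).mpr (pow_ne_zero _ hϖ)) h ▸ hs,
      fun hy => ⟨y, hy, rfl⟩⟩
  rw [hcancel, map_add_map_mul_mem_ordSet_iff hf hβ, pow_add, mul_comm (ϖ ^ m),
    mul_dvd_mul_iff_left (pow_ne_zero d hϖ)]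

end Orbits

section Layers

variable {o O : Type*} [CommRing o] [IsDomain o] [IsDiscreteValuationRing o] [CommRing O]
  [IsDomain O] [IsDiscreteValuationRing O] {f : o →+* O} {ϖ : o} {β : O} {σ : O →+* O}
  {Nr : O →* o} {r : ℕ} [IsLocalHom f]

/-- Since `f ϖ` is a uniformizer of `O` with norm `ϖ ^ 2`, the valuation of a norm is even and
the `O`-valuation of `z` is half of it. -/
lemma exists_pow_dvd_of_norm_eq (hf : Injective f) (hσf : ∀ x : o, σ (f x) = f x)
    (hNr : ∀ z : O, f (Nr z) = z * σ z) (hϖ : Irreducible ϖ) (hunram : Irreducible (f ϖ))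
    {z : O} {n : ℕ} {w : oˣ} (hw : Nr z = ϖ ^ n * w) :
    ∃ k, n = 2 * k ∧ f ϖ ^ k ∣ z ∧ ¬ f ϖ ^ (k + 1) ∣ z := by
  have hz : z ≠ 0 := by
    rintro rfl
    have h0 : Nr 0 = 0 := by simpa using norm_map_eq_sq hf hσf hNr 0
    exact mul_ne_zero (pow_ne_zero n hϖ.ne_zero) w.ne_zero (hw ▸ h0)
  obtain ⟨k, u, rfl⟩ := IsDiscreteValuationRing.eq_unit_mul_pow_irreducible hz hunram
  have hNu : IsUnit (Nr u) := (isUnit_norm_iff hNr).mpr u.isUnit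
  have hn : ↑w * ϖ ^ n = ↑hNu.unit * ϖ ^ (2 * k) := by
    rw [mul_comm, ← hw, map_mul, ← map_pow, norm_map_eq_sq hf hσf hNr, IsUnit.unit_spec]
    ring
  refine ⟨k, IsDiscreteValuationRing.unit_mul_pow_congr_pow hϖ hϖ _ _ _ _ hn,
    dvd_mul_left _ _, fun h => hunram.not_isUnit ?_⟩
  rw [pow_succ, mul_comm (u : O)] at h
  exact isUnit_of_dvd_unit ((mul_dvd_mul_iff_left (pow_ne_zero k hunram.ne_zero)).mp h) u.isUnit

lemma exists_coords_of_mem_ordLayer (hf : Injective f) (hβ : β ∉ Set.range f)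
    (hgen : ∀ z : O, ∃ x y : o, z = f x + f y * β) (hσf : ∀ x : o, σ (f x) = f x)
    (hNr : ∀ z : O, f (Nr z) = z * σ z) (hϖ : Irreducible ϖ) (hunram : Irreducible (f ϖ))
    {n : ℕ} {z : O} (hz : z ∈ ordLayer f ϖ β Nr r n) :
    ∃ m a b, n = 2 * m ∧ m ≤ r ∧ z = f (ϖ ^ m * a) + f (ϖ ^ r * b) * β ∧
      (0 < m → IsUnit b) ∧ (m < r → IsUnit a) := by
  obtain ⟨⟨a, b, rfl⟩, hprim, w, hw⟩ := hz
  rw [exists_mem_ordSet_eq_map_mul_iff hf hβ hϖ.ne_zero] at hprim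
  obtain ⟨m, rfl, hdvd, hndvd⟩ := exists_pow_dvd_of_norm_eq hf hσf hNr hϖ hunram hw
  rw [← map_pow, map_dvd_map_add_map_mul_iff hf hβ hgen] at hdvd hndvd
  obtain ⟨⟨a₀, rfl⟩, hbdvd⟩ := hdvd
  have hb : 0 < m → IsUnit b := fun hm => by
    by_contra hb
    exact hprim ⟨dvd_mul_of_dvd_left (dvd_pow_self ϖ hm.ne') _, hϖ.dvd_iff_not_isUnit.mpr hb⟩
  have hmr : m ≤ r := by
    by_contra! hrm
    rw [(hb (by omega)).dvd_mul_right, pow_dvd_pow_iff hϖ.ne_zero hϖ.not_isUnit] at hbdvd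
    omega
  refine ⟨m, a₀, b, rfl, hmr, rfl, hb, fun hm => ?_⟩
  by_contra ha₀
  rw [pow_succ] at hndvd
  exact hndvd ⟨mul_dvd_mul_left _ (hϖ.dvd_iff_not_isUnit.mpr ha₀),
    dvd_mul_of_dvd_left (pow_succ ϖ m ▸ pow_dvd_pow ϖ hm) _⟩

lemma map_add_map_mul_mem_ordLayer (hf : Injective f) (hβ : β ∉ Set.range f)
    (hgen : ∀ z : O, ∃ x y : o, z = f x + f y * β) (hσf : ∀ x : o, σ (f x) = f x)
    (hNr : ∀ z : O, f (Nr z) = z * σ z) (hϖ : Irreducible ϖ) (hunram : Irreducible (f ϖ))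
    {m : ℕ} (hmr : m ≤ r) {c : o} (hc : m < r → IsUnit c) :
    f (ϖ ^ m * c) + f (ϖ ^ r * 1) * β ∈ ordLayer f ϖ β Nr r (2 * m) := by
  obtain ⟨d, rfl⟩ := Nat.exists_eq_add_of_le hmr
  have hy : IsUnit (f c + f (ϖ ^ d) * β) := by
    rw [isUnit_map_add_map_mul_iff hf hβ hgen hunram]
    rintro ⟨hϖc, hϖd⟩
    rcases d with _ | d
    · exact hϖ.not_isUnit (isUnit_of_dvd_unit hϖd (by simp))
    · exact hϖ.not_isUnit (isUnit_of_dvd_unit hϖc (hc (by omega)))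
  have hNy := (isUnit_norm_iff hNr).mpr hy
  refine ⟨⟨_, _, rfl⟩, ?_, hNy.unit, ?_⟩
  · rw [exists_mem_ordSet_eq_map_mul_iff hf hβ hϖ.ne_zero]
    exact fun h => hϖ.not_isUnit (isUnit_of_dvd_unit h.2 isUnit_one)
  · have hz : f (ϖ ^ m * c) + f (ϖ ^ (m + d) * 1) * β = f (ϖ ^ m) * (f c + f (ϖ ^ d) * β) := by
      simp only [map_mul, map_pow, map_one, pow_add]; ring
    rw [hz, map_mul, norm_map_eq_sq hf hσf hNr, IsUnit.unit_spec]
    ring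

end Layers

section UnitLayer

variable {o O : Type*} [CommRing o] [CommRing O] {f : o →+* O} {ϖ : o} {β : O} {σ : O →+* O}
  {Nr : O →* o} {r : ℕ}

lemma ordLayerOrbits_zero (hgen : ∀ z : O, ∃ x y : o, z = f x + f y * β)
    (hσf : ∀ x : o, σ (f x) = f x) (hNr : ∀ z : O, f (Nr z) = z * σ z)
    (hfϖ : ¬ IsUnit (f ϖ)) : ordLayerOrbits f ϖ β Nr r 0 = 1 := by
  unfold ordLayerOrbits
  have hone : (1 : O) ∈ ordLayer f ϖ β Nr r 0 :=
    ⟨one_mem_ordSet, fun ⟨s, _, h⟩ => hfϖ (IsUnit.of_mul_eq_one s h.symm), 1, by simp⟩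
  -- an element of norm a unit is itself a unit of `𝒪_r`, so it lies in the orbit of `1`
  have hunit (t : ordLayer f ϖ β Nr r 0) : ∃ u ∈ ordUnits f ϖ β r, u * 1 = (t : O) :=
    ⟨t, mem_ordUnits_of_isUnit_norm hgen hσf hNr t.2.1
      (by obtain ⟨-, -, u, hu⟩ := t.2; simp [hu]), mul_one _⟩
  refine Nat.card_eq_one_iff_unique.mpr ⟨⟨fun x y => ?_⟩, ⟨Quot.mk _ ⟨1, hone⟩⟩⟩
  induction x using Quot.ind with | mk t =>
  induction y using Quot.ind with | mk t' =>
  exact (Quot.sound (a := ⟨1, hone⟩) (hunit t)).symm.trans (Quot.sound (hunit t'))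

end UnitLayer

section Counting

variable {o O : Type*} [CommRing o] [IsDomain o] [IsDiscreteValuationRing o] [CommRing O]
  [IsDomain O] [IsDiscreteValuationRing O] {f : o →+* O} {ϖ : o} {β : O} {σ : O →+* O}
  {Nr : O →* o} {r : ℕ} [IsLocalHom f]

lemma ordLayerOrbits_eq_zero (hf : Injective f) (hβ : β ∉ Set.range f)
    (hgen : ∀ z : O, ∃ x y : o, z = f x + f y * β) (hσf : ∀ x : o, σ (f x) = f x)
    (hNr : ∀ z : O, f (Nr z) = z * σ z) (hϖ : Irreducible ϖ) (hunram : Irreducible (f ϖ))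
    {n : ℕ} (hn : Odd n ∨ 2 * r < n) : ordLayerOrbits f ϖ β Nr r n = 0 := by
  have : IsEmpty (ordLayer f ϖ β Nr r n) := ⟨fun ⟨z, hz⟩ => by
    obtain ⟨m, -, -, rfl, hmr, -⟩ :=
      exists_coords_of_mem_ordLayer hf hβ hgen hσf hNr hϖ hunram hz
    rcases hn with ⟨j, hj⟩ | hn <;> omega⟩
  exact Nat.card_of_isEmpty

lemma ordLayerOrbits_two_mul (hf : Injective f) (hβ : β ∉ Set.range f)
    (hgen : ∀ z : O, ∃ x y : o, z = f x + f y * β) (hσf : ∀ x : o, σ (f x) = f x)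
    (hNr : ∀ z : O, f (Nr z) = z * σ z) (hϖ : Irreducible ϖ) (hunram : Irreducible (f ϖ))
    {m : ℕ} (hm : 0 < m) (hmr : m ≤ r) :
    ordLayerOrbits f ϖ β Nr r (2 * m)
      = Nat.card {c : o ⧸ Ideal.span {ϖ ^ m} // m < r → IsUnit c} := by
  have := isLocalHom_mk_span_pow hϖ hm
  set mk := Ideal.Quotient.mk (Ideal.span {ϖ ^ m})
  set lift := surjInv (Ideal.Quotient.mk_surjective (I := Ideal.span {ϖ ^ m}))
  have hlift (c) : mk (lift c) = c := surjInv_eq _ c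
  have hrepr (c : {c : o ⧸ Ideal.span {ϖ ^ m} // m < r → IsUnit c}) :=
    map_add_map_mul_mem_ordLayer hf hβ hgen hσf hNr hϖ hunram hmr (c := lift c)
      fun h => by rw [← isUnit_map_iff mk, hlift]; exact c.2 h
  have hrel := ordUnits_mul_equivalence (ϖ := ϖ) (r := r) hgen (ordLayer f ϖ β Nr r (2 * m))
  unfold ordLayerOrbits
  refine (Nat.card_congr (Equiv.ofBijective (fun c => Quot.mk _ ⟨_, hrepr c⟩) ⟨?_, ?_⟩)).symm
  · intro c c' h
    obtain ⟨-, -, w, hw⟩ := hrepr c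
    obtain ⟨-, -, w', hw'⟩ := hrepr c'
    have hdvd := (exists_ordUnits_mul_eq_iff_dvd hf hβ hgen hσf hNr hϖ.ne_zero hmr hw hw').mp
      (hrel.eqvGen_iff.mp (Quot.eqvGen_exact h))
    rw [mul_one, mul_one, ← Ideal.mem_span_singleton, ← Ideal.Quotient.eq] at hdvd
    exact Subtype.ext (by rw [← hlift c.1, ← hlift c'.1]; exact hdvd)
  · rintro ⟨z, hz⟩
    obtain ⟨m', a, b, hm', -, rfl, hb, ha⟩ :=
      exists_coords_of_mem_ordLayer hf hβ hgen hσf hNr hϖ hunram hz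
    obtain rfl : m' = m := by omega
    replace hb := hb hm
    refine ⟨⟨mk (a * hb.unit⁻¹), fun h => by
      rw [map_mul]; exact ((ha h).map mk).mul (hb.unit⁻¹.isUnit.map mk)⟩, Quot.sound ?_⟩
    obtain ⟨-, -, w, hw⟩ := hrepr ⟨mk (a * hb.unit⁻¹), _⟩
    obtain ⟨-, -, w', hw'⟩ := hz
    rw [exists_ordUnits_mul_eq_iff_dvd hf hβ hgen hσf hNr hϖ.ne_zero hmr hw hw']
    obtain ⟨e, he⟩ :=
      Ideal.mem_span_singleton.mp (Ideal.Quotient.eq.mp (hlift (mk (a * hb.unit⁻¹))))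
    exact ⟨e * b, by linear_combination b * he + a * hb.val_inv_mul⟩

end Counting

theorem stmt_5_general {o O : Type*} [CommRing o] [IsDomain o] [IsDiscreteValuationRing o]
    [CommRing O] [IsDomain O] [IsDiscreteValuationRing O]
    (f : o →+* O) (hf : Function.Injective f)
    (ϖ : o) (hϖ : Irreducible ϖ)
    (q : ℕ) (hfin : Finite (o ⧸ Ideal.span ({ϖ} : Set o)))
    (hq : Nat.card (o ⧸ Ideal.span ({ϖ} : Set o)) = q)
    (β : O) (hβ : β ∉ Set.range f)
    (hgen : ∀ z : O, ∃ x y : o, z = f x + f y * β)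
    (σ : O →+* O) (hσf : ∀ x : o, σ (f x) = f x)
    (Nr : O →* o) (hNr : ∀ z : O, f (Nr z) = z * σ z)
    (hunram : Irreducible (f ϖ))
    (r n : ℕ) :
    ((Odd n ∨ 2 * r < n) → ordLayerOrbits f ϖ β Nr r n = 0) ∧
    (n = 0 → ordLayerOrbits f ϖ β Nr r n = 1) ∧
    (n = 2 * r → ordLayerOrbits f ϖ β Nr r n = q ^ r) ∧
    (Even n → 0 < n → n < 2 * r →
      ordLayerOrbits f ϖ β Nr r n = q ^ (n / 2) - q ^ (n / 2 - 1)) := by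
  have : IsLocalHom f := isLocalHom_of_not_isUnit_map hϖ hunram.not_isUnit
  have horbits (m : ℕ) := ordLayerOrbits_two_mul hf hβ hgen hσf hNr hϖ hunram (r := r) (m := m)
  refine ⟨ordLayerOrbits_eq_zero hf hβ hgen hσf hNr hϖ hunram,
    fun hn => hn ▸ ordLayerOrbits_zero hgen hσf hNr hunram.not_isUnit, fun hn => ?_,
    fun ⟨m, hm⟩ hpos hlt => ?_⟩
  · subst hn
    rcases Nat.eq_zero_or_pos r with rfl | hr
    · exact ordLayerOrbits_zero hgen hσf hNr hunram.not_isUnit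
    · rw [horbits r hr le_rfl,
        Nat.card_congr (Equiv.subtypeUnivEquiv fun _ h => absurd h (lt_irrefl r)),
        card_quotient_span_pow hϖ.ne_zero, hq]
  · obtain rfl : n = 2 * m := by omega
    rw [horbits m (by omega) (by omega),
      Nat.card_congr (Equiv.subtypeEquivRight fun _ => ⟨fun h => h (by omega), fun h _ => h⟩),
      card_units_quotient_span_pow hϖ (by omega), hq, Nat.mul_div_cancel_left m two_pos]

/-- If `E/F` is an unramified quadratic field extension and the
residue field of `𝔬` has `q` elements, then `|𝒪_r^× \ 𝒪_r^{(n)}|` equals: `0` if `n`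
is odd or `n > 2r`; `1` if `n = 0`; `q^r` if `n = 2r`; and
`q^{n/2}(1 − q^{−1}) = q^{n/2} − q^{n/2 − 1}` if `n` is even and `0 < n < 2r`. -/
theorem stmt_5 {o O : Type*} [CommRing o] [IsDomain o] [IsDiscreteValuationRing o]
    [CommRing O] [IsDomain O] [IsDiscreteValuationRing O]
    (f : o →+* O) (hf : Function.Injective f)
    (ϖ : o) (hϖ : Irreducible ϖ)
    (q : ℕ) (hfin : Finite (o ⧸ Ideal.span ({ϖ} : Set o)))
    (hq : Nat.card (o ⧸ Ideal.span ({ϖ} : Set o)) = q)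
    (β : O) (hβ : β ∉ Set.range f)
    (hgen : ∀ z : O, ∃ x y : o, z = f x + f y * β)
    (σ : O →+* O) (hσf : ∀ x : o, σ (f x) = f x) (hσσ : ∀ z : O, σ (σ z) = z)
    (Nr : O →* o) (hNr : ∀ z : O, f (Nr z) = z * σ z)
    (hβunit : IsUnit (Nr β))
    (hunram : Irreducible (f ϖ))
    (r n : ℕ) :
    ((Odd n ∨ 2 * r < n) → ordLayerOrbits f ϖ β Nr r n = 0) ∧
    (n = 0 → ordLayerOrbits f ϖ β Nr r n = 1) ∧
    (n = 2 * r → ordLayerOrbits f ϖ β Nr r n = q ^ r) ∧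
    (Even n → 0 < n → n < 2 * r →
      ordLayerOrbits f ϖ β Nr r n = q ^ (n / 2) - q ^ (n / 2 - 1)) :=
  stmt_5_general f hf ϖ hϖ q hfin hq β hβ hgen σ hσf Nr hNr hunram r n
end

section
/- Let E/F be a quadratic field extension. For every r ∈ ℕ and every integer n ≥ 1, the index of unit groups satisfies [𝒪_r^× : 𝒪_{r+n}^×] = q^n if r > 0 or E/F is ramified, and [𝒪_r^× : 𝒪_{r+n}^×] = q^n(1 + q^{−1}) if r = 0 and E/F is unramified. -/
/-- The index `[𝒪_r^× : 𝒪_{r+n}^×]`, i.e. the number of cosets of `𝒪_{r+n}^×`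
in `𝒪_r^×` (orbits of the multiplication action of `𝒪_{r+n}^×` on `𝒪_r^×`). -/
noncomputable def unitIndex {o O : Type*} [CommRing o] [CommRing O]
    (f : o →+* O) (ϖ : o) (β : O) (r n : ℕ) : ℕ :=
  Nat.card (Quot (fun t t' : ordUnits f ϖ β r =>
    ∃ u ∈ ordUnits f ϖ β (r + n), u * (t : O) = t'))

/-!
Put `γ = ϖ ^ r β`, of trace `t` and norm `m`. Then `𝒪_r = 𝔬 + 𝔬γ` and `𝒪_{r+n} = 𝔬 + ϖ ^ n 𝔬γ`,
so it suffices to treat `r = 0` with `γ` in place of `β`. In the coordinates `x + yγ`, an element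
of `𝒪_r` is a unit iff its norm `x² + txy + my²` is a unit, and two units lie in the same coset of
`𝒪_{r+n}^×` iff their coordinates modulo `ϖ ^ n` differ by a scalar in `(𝔬/ϖ^n)^×`. This scalar
action on unit-norm pairs is free, so the index is their number divided by
`#(𝔬/ϖ^n)^× = (q - 1) q^(n-1)`; and the unit-norm pairs are the lifts of the pairs in `k²`,
`k = 𝔬/𝔭`, at which the reduced form is nonzero, each pair having `q^(2(n-1))` lifts. Over `k`
the form is `(x + sy)²` if `r > 0` or `E/F` is ramified, with `(q - 1) q` nonzeros, and it is
anisotropic if `r = 0` and `E/F` is unramified, with `q² - 1` nonzeros.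
-/

open Function MulAction

section Counting

theorem Nat.card_quot_eq_card_quotient_of_surjective {X Y : Type*} {r : X → X → Prop}
    (s : Setoid Y) {c : X → Y} (hc : Surjective c) (h : ∀ x x', r x x' ↔ s (c x) (c x')) :
    Nat.card (Quot r) = Nat.card (Quotient s) := by
  refine Nat.card_eq_of_bijective
    (Quot.lift (fun x => Quotient.mk s (c x)) fun x x' hr => Quotient.sound ((h x x').1 hr))
    ⟨?_, ?_⟩
  · rintro ⟨x⟩ ⟨x'⟩ hxx'
    exact Quot.sound ((h x x').2 (Quotient.exact hxx'))
  · rintro ⟨y⟩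
    obtain ⟨x, rfl⟩ := hc y
    exact ⟨Quot.mk r x, rfl⟩

variable {A B : Type*} [AddCommGroup A] [AddCommGroup B]

noncomputable def AddMonoidHom.preimageEquivProdKer (φ : A →+ B) (hφ : Surjective φ)
    (S : Set B) : φ ⁻¹' S ≃ S × φ.ker where
  toFun a := (⟨φ a, a.2⟩, ⟨a - surjInv hφ (φ a), by simp [surjInv_eq hφ]⟩)
  invFun p := ⟨surjInv hφ p.1 + p.2, by
    simp [(AddMonoidHom.mem_ker).1 p.2.2, surjInv_eq hφ]⟩
  left_inv a := by ext; simp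
  right_inv p := by
    have hp : φ (surjInv hφ p.1 + p.2) = p.1 := by
      simp [(AddMonoidHom.mem_ker).1 p.2.2, surjInv_eq hφ]
    ext
    · exact hp
    · simp [hp]

theorem AddMonoidHom.card_preimage_mul_card (φ : A →+ B) (hφ : Surjective φ) (S : Set B) :
    Nat.card (φ ⁻¹' S) * Nat.card B = Nat.card S * Nat.card A := by
  rw [Nat.card_congr (φ.preimageEquivProdKer hφ S), Nat.card_prod,
    AddSubgroup.card_eq_card_quotient_mul_card_addSubgroup φ.ker,
    Nat.card_congr (QuotientAddGroup.quotientKerEquivOfSurjective φ hφ).toEquiv]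
  ring

theorem Nat.card_subtype_ne {k : Type*} [Finite k] (a : k) :
    Nat.card {x : k // x ≠ a} = Nat.card k - 1 := by
  classical
  have := Fintype.ofFinite k
  simp [Nat.card_eq_fintype_card, Fintype.card_subtype_compl]

end Counting

theorem Ideal.span_singleton_pow_le {R : Type*} [CommSemiring R] (a : R) {n : ℕ} (hn : n ≠ 0) :
    Ideal.span {a ^ n} ≤ Ideal.span {a} :=
  Ideal.span_singleton_le_span_singleton.2 (dvd_pow_self a hn)

section DiscreteValuationRing

variable {o : Type*} [CommRing o] [IsDomain o] [IsDiscreteValuationRing o] {ϖ : o}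

theorem Irreducible.isUnit_iff_not_dvd (hϖ : Irreducible ϖ) (a : o) : IsUnit a ↔ ¬ϖ ∣ a := by
  rw [← IsLocalRing.notMem_maximalIdeal, hϖ.maximalIdeal_eq, Ideal.mem_span_singleton]

theorem Irreducible.isUnit_mk_span_pow_iff (hϖ : Irreducible ϖ) {n : ℕ} (hn : n ≠ 0) (a : o) :
    IsUnit (Ideal.Quotient.mk (Ideal.span {ϖ ^ n}) a) ↔ IsUnit a := by
  have : IsLocalHom (Ideal.Quotient.mk (Ideal.span {ϖ ^ n})) := by
    refine isLocalHom_of_le_jacobson_bot _ ?_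
    rw [IsLocalRing.jacobson_eq_maximalIdeal ⊥ bot_ne_top, hϖ.maximalIdeal_eq]
    exact Ideal.span_singleton_pow_le ϖ hn
  exact ⟨isUnit_of_map_unit _ a, (·.map _)⟩

theorem Irreducible.isLocalRing_quotient_span_pow (hϖ : Irreducible ϖ) {n : ℕ} (hn : n ≠ 0) :
    IsLocalRing (o ⧸ Ideal.span {ϖ ^ n}) := by
  have : Nontrivial (o ⧸ Ideal.span {ϖ ^ n}) := Ideal.Quotient.nontrivial_iff.2 <| by
    rw [Ne, Ideal.span_singleton_eq_top, isUnit_pow_iff hn]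
    exact hϖ.not_isUnit
  exact .of_surjective' _ Ideal.Quotient.mk_surjective

theorem Irreducible.isUnit_iff_factor_ne_zero (hϖ : Irreducible ϖ) {n : ℕ} (hn : n ≠ 0)
    (a : o ⧸ Ideal.span {ϖ ^ n}) :
    IsUnit a ↔ Ideal.Quotient.factor (Ideal.span_singleton_pow_le ϖ hn) a ≠ 0 := by
  obtain ⟨a, rfl⟩ := Ideal.Quotient.mk_surjective a
  rw [hϖ.isUnit_mk_span_pow_iff hn, hϖ.isUnit_iff_not_dvd, Ideal.Quotient.factor_mk, ne_eq,
    Ideal.Quotient.eq_zero_iff_mem, Ideal.mem_span_singleton]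

theorem Irreducible.card_quotient_span_pow (hϖ : Irreducible ϖ) (n : ℕ) :
    Nat.card (o ⧸ Ideal.span {ϖ ^ n}) = Nat.card (o ⧸ Ideal.span {ϖ}) ^ n := by
  have : (Ideal.span {ϖ}).IsPrime := (Ideal.span_singleton_prime hϖ.ne_zero).2 hϖ.prime
  rw [← Ideal.span_singleton_pow, ← Submodule.cardQuot_apply, ← Submodule.cardQuot_apply,
    cardQuot_pow_of_prime (by simpa using hϖ.ne_zero)]

theorem Irreducible.exists_units_smul_mk_eq_iff (hϖ : Irreducible ϖ) {n : ℕ} (hn : n ≠ 0)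
    (x y x' y' : o) :
    (∃ u : (o ⧸ Ideal.span {ϖ ^ n})ˣ, u • (Ideal.Quotient.mk (Ideal.span {ϖ ^ n}) x,
        Ideal.Quotient.mk (Ideal.span {ϖ ^ n}) y) = (Ideal.Quotient.mk (Ideal.span {ϖ ^ n}) x',
          Ideal.Quotient.mk (Ideal.span {ϖ ^ n}) y')) ↔
      ∃ a, IsUnit a ∧ ϖ ^ n ∣ a * x - x' ∧ ϖ ^ n ∣ a * y - y' := by
  simp only [Prod.smul_mk, Units.smul_def, smul_eq_mul, Prod.mk.injEq]
  constructor
  · rintro ⟨u, h₁, h₂⟩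
    obtain ⟨a, ha⟩ := Ideal.Quotient.mk_surjective (u : o ⧸ Ideal.span {ϖ ^ n})
    refine ⟨a, (hϖ.isUnit_mk_span_pow_iff hn a).1 (ha ▸ u.isUnit), ?_, ?_⟩
    · rwa [← Ideal.mem_span_singleton, ← Ideal.Quotient.eq, map_mul, ha]
    · rwa [← Ideal.mem_span_singleton, ← Ideal.Quotient.eq, map_mul, ha]
  · rintro ⟨a, ha, h₁, h₂⟩
    refine ⟨(ha.map (Ideal.Quotient.mk _)).unit, ?_, ?_⟩
    · rwa [IsUnit.unit_spec, ← map_mul, Ideal.Quotient.eq, Ideal.mem_span_singleton]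
    · rwa [IsUnit.unit_spec, ← map_mul, Ideal.Quotient.eq, Ideal.mem_span_singleton]

end DiscreteValuationRing

section NormForm

variable {R k : Type*} [CommRing R] [CommRing k]

/-- The norm of `x + y γ` for `γ` of trace `t` and norm `m`, as a function of `p = (x, y)`. -/
def normForm (t m : R) (p : R × R) : R :=
  p.1 * p.1 + t * p.1 * p.2 + m * p.2 * p.2

theorem map_normForm (g : R →+* k) (t m : R) (p : R × R) :
    g (normForm t m p) = normForm (g t) (g m) (Prod.map g g p) := by
  simp [normForm]

theorem normForm_smul (t m : R) (u : Rˣ) (p : R × R) :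
    normForm t m (u • p) = u * u * normForm t m p := by
  simp only [normForm, Prod.smul_fst, Prod.smul_snd, Units.smul_def, smul_eq_mul]
  ring

def unitLocus (t m : R) : SubMulAction Rˣ (R × R) where
  carrier := {p | IsUnit (normForm t m p)}
  smul_mem' u p hp := by
    rw [Set.mem_ofPred_eq, normForm_smul]
    exact (u.isUnit.mul u.isUnit).mul hp

theorem mem_unitLocus {t m : R} {p : R × R} : p ∈ unitLocus t m ↔ IsUnit (normForm t m p) :=
  Iff.rfl

theorem isUnit_fst_or_isUnit_snd [IsLocalRing R] {t m : R} {p : R × R}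
    (hp : IsUnit (normForm t m p)) : IsUnit p.1 ∨ IsUnit p.2 := by
  by_contra! h
  obtain ⟨h₁, h₂⟩ : p.1 ∈ IsLocalRing.maximalIdeal R ∧ p.2 ∈ IsLocalRing.maximalIdeal R :=
    ⟨(IsLocalRing.mem_maximalIdeal _).2 h.1, (IsLocalRing.mem_maximalIdeal _).2 h.2⟩
  refine IsLocalRing.notMem_maximalIdeal.2 hp ?_
  exact Ideal.add_mem _ (Ideal.add_mem _ (Ideal.mul_mem_left _ _ h₁) (Ideal.mul_mem_left _ _ h₂))
    (Ideal.mul_mem_left _ _ h₂)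

theorem stabilizer_unitLocus [IsLocalRing R] (t m : R) (p : unitLocus t m) :
    stabilizer Rˣ p = ⊥ := by
  refine eq_bot_iff.2 fun u hu => Subgroup.mem_bot.2 (Units.val_eq_one.1 ?_)
  have hup : (u : R) * p.1.1 = p.1.1 ∧ (u : R) * p.1.2 = p.1.2 := by
    simpa [Prod.ext_iff, Units.smul_def] using congrArg Subtype.val (mem_stabilizer_iff.1 hu)
  rcases isUnit_fst_or_isUnit_snd p.2 with h | h
  · exact h.mul_eq_right.1 hup.1
  · exact h.mul_eq_right.1 hup.2

theorem card_unitLocus [IsLocalRing R] (t m : R) :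
    Nat.card (unitLocus t m) =
      Nat.card (orbitRel.Quotient Rˣ (unitLocus t m)) * Nat.card Rˣ := by
  rw [Nat.card_congr (selfEquivOrbitsQuotientProd (stabilizer_unitLocus t m)), Nat.card_prod]

variable (φ : R →+* k) (hφ : Surjective φ) (hunit : ∀ r, IsUnit r ↔ φ r ≠ 0)
include hφ hunit

theorem card_unitLocus_mul_card_sq (t m : R) :
    Nat.card (unitLocus t m) * (Nat.card k * Nat.card k) =
      Nat.card {w : k × k // normForm (φ t) (φ m) w ≠ 0} * (Nat.card R * Nat.card R) := by
  let Φ := φ.toAddMonoidHom.prodMap φ.toAddMonoidHom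
  have e : unitLocus t m ≃ Φ ⁻¹' {w | normForm (φ t) (φ m) w ≠ 0} :=
    Equiv.subtypeEquivRight fun p => by
      simp [mem_unitLocus, hunit, map_normForm, Φ]
  rw [Nat.card_congr e, ← Nat.card_prod k k, ← Nat.card_prod R R]
  exact Φ.card_preimage_mul_card (hφ.prodMap hφ) _

theorem card_units_mul_card [Finite k] :
    Nat.card Rˣ * Nat.card k = (Nat.card k - 1) * Nat.card R := by
  have e : Rˣ ≃ φ.toAddMonoidHom ⁻¹' {0}ᶜ :=
    Equiv.ofBijective (fun u => ⟨u, (hunit u).1 u.isUnit⟩)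
      ⟨fun u v huv => Units.ext (congrArg Subtype.val huv),
        fun r => ⟨((hunit r).2 r.2).unit, rfl⟩⟩
  rw [Nat.card_congr e, ← Nat.card_subtype_ne (0 : k)]
  exact φ.toAddMonoidHom.card_preimage_mul_card hφ _

end NormForm

section FiniteCount

variable {k : Type*} [CommRing k]

theorem normForm_two_mul_mul_self (s : k) (p : k × k) :
    normForm (2 * s) (s * s) p = (p.1 + s * p.2) ^ 2 := by
  simp only [normForm]
  ring

variable [Finite k]

theorem card_normForm_ne_zero_of_square [NoZeroDivisors k] (s : k) :
    Nat.card {w : k × k // normForm (2 * s) (s * s) w ≠ 0} = (Nat.card k - 1) * Nat.card k := by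
  let e : {w : k × k // normForm (2 * s) (s * s) w ≠ 0} ≃ {x : k // x ≠ 0} × k :=
    { toFun w := (⟨w.1.1 + s * w.1.2, by simpa [normForm_two_mul_mul_self] using w.2⟩, w.1.2)
      invFun p := ⟨(p.1 - s * p.2, p.2), by simpa [normForm_two_mul_mul_self] using p.1.2⟩
      left_inv w := by ext <;> simp
      right_inv p := by ext <;> simp }
  rw [Nat.card_congr e, Nat.card_prod, Nat.card_subtype_ne]

theorem card_normForm_ne_zero_of_anisotropic {t m : k}
    (h : ∀ w, normForm t m w = 0 → w = 0) :
    Nat.card {w : k × k // normForm t m w ≠ 0} = Nat.card k * Nat.card k - 1 := by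
  have e : {w : k × k // normForm t m w ≠ 0} ≃ {w : k × k // w ≠ 0} :=
    Equiv.subtypeEquivRight fun w =>
      ⟨fun hw h0 => hw (by simp [h0, normForm]), fun hw h0 => hw (h w h0)⟩
  rw [Nat.card_congr e, Nat.card_subtype_ne, Nat.card_prod]

end FiniteCount

section QuadraticOrder

variable {o O : Type*} [CommRing o] [CommRing O] {f : o →+* O} {σ : O →+* O} {Nr : O →* o}

def IndepWithOne (f : o →+* O) (γ : O) : Prop :=
  ∀ x y : o, f x + f y * γ = 0 → x = 0 ∧ y = 0

theorem IndepWithOne.eq_and_eq {γ : O} (hγ : IndepWithOne f γ) {x y x' y' : o}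
    (h : f x + f y * γ = f x' + f y' * γ) : x = x' ∧ y = y' := by
  have := hγ (x - x') (y - y') (by rw [map_sub, map_sub]; linear_combination h)
  exact ⟨sub_eq_zero.1 this.1, sub_eq_zero.1 this.2⟩

theorem IndepWithOne.map_mul_left [IsDomain o] {β : O} (hβ : IndepWithOne f β) {c : o}
    (hc : c ≠ 0) : IndepWithOne f (f c * β) := by
  intro x y h
  have := hβ x (y * c) (by rw [map_mul]; linear_combination h)
  exact ⟨this.1, (mul_eq_zero.1 this.2).resolve_right hc⟩

theorem exists_sigma_eq_sub (hNr : ∀ z, f (Nr z) = z * σ z) (z : O) : ∃ t, σ z = f t - z :=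
  ⟨Nr (1 + z) - 1 - Nr z, by
    rw [map_sub, map_sub, hNr, hNr, map_add, map_one, map_one]
    ring⟩

theorem isUnit_of_isUnit_nr (hNr : ∀ z, f (Nr z) = z * σ z) {z : O} (h : IsUnit (Nr z)) :
    IsUnit z :=
  isUnit_of_mul_isUnit_left (y := σ z) (by rw [← hNr]; exact h.map f)

theorem nr_map (hf : Injective f) (hσf : ∀ x, σ (f x) = f x)
    (hNr : ∀ z, f (Nr z) = z * σ z) (x : o) : Nr (f x) = x * x :=
  hf (by rw [hNr, hσf, map_mul])

theorem isUnit_of_isUnit_map (hf : Injective f) (hσf : ∀ x, σ (f x) = f x)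
    (hNr : ∀ z, f (Nr z) = z * σ z) {x : o} (h : IsUnit (f x)) : IsUnit x :=
  isUnit_of_mul_isUnit_left (y := x) (by rw [← nr_map hf hσf hNr]; exact h.map Nr)

theorem indepWithOne_of_notMem_range [IsDomain o] [IsIntegrallyClosed o] [IsDomain O]
    (hf : Injective f) (hσf : ∀ x, σ (f x) = f x) (hNr : ∀ z, f (Nr z) = z * σ z) {β : O}
    (hβ : β ∉ Set.range f) : IndepWithOne f β := by
  intro x y h
  suffices hy : y = 0 by
    subst hy
    exact ⟨(map_eq_zero_iff f hf).1 (by simpa using h), rfl⟩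
  by_contra hy
  have hxy : f (-x) = f y * β := by rw [map_neg]; linear_combination -h
  have hsq : y ^ 2 ∣ (-x) ^ 2 := ⟨Nr β, by
    have := congrArg Nr hxy
    rw [nr_map hf hσf hNr, map_mul, nr_map hf hσf hNr] at this
    linear_combination this⟩
  obtain ⟨c, hc⟩ := (IsIntegrallyClosed.pow_dvd_pow_iff two_ne_zero).1 hsq
  refine hβ ⟨c, mul_left_cancel₀ ((map_ne_zero_iff f hf).2 hy) ?_⟩
  rw [← map_mul, ← hc, hxy]

variable {γ : O} {t : o}

theorem sigma_add_mul (hσf : ∀ x, σ (f x) = f x) (hγ : σ γ = f t - γ) (x y : o) :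
    σ (f x + f y * γ) = f (x + t * y) + f (-y) * γ := by
  rw [map_add, map_mul, hσf, hσf, hγ, map_add, map_mul, map_neg]
  ring

theorem add_mul_mul_add_mul (hNr : ∀ z, f (Nr z) = z * σ z) (hγ : σ γ = f t - γ)
    (x y x' y' : o) :
    (f x + f y * γ) * (f x' + f y' * γ) =
      f (x * x' - Nr γ * y * y') + f (x * y' + x' * y + t * y * y') * γ := by
  have hγγ := hNr γ
  rw [hγ] at hγγ
  simp only [map_add, map_sub, map_mul]
  linear_combination (f y * f y') * hγγ

theorem nr_add_mul (hf : Injective f) (hσf : ∀ x, σ (f x) = f x)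
    (hNr : ∀ z, f (Nr z) = z * σ z) (hγ : σ γ = f t - γ) (x y : o) :
    Nr (f x + f y * γ) = normForm t (Nr γ) (x, y) := by
  apply hf
  rw [hNr, sigma_add_mul hσf hγ, add_mul_mul_add_mul hNr hγ]
  simp only [normForm, map_add, map_sub, map_mul, map_neg]
  ring

theorem dvd_and_dvd_of_dvd_nr {ϖ : o} {β : O} (hσf : ∀ x, σ (f x) = f x)
    (hσσ : ∀ z, σ (σ z) = z) (hNr : ∀ z, f (Nr z) = z * σ z) (hgen : ∀ z, ∃ x y, z = f x + f y * β)
    (hind : IndepWithOne f β) (hϖ : Prime (f ϖ)) {x y : o}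
    (h : ϖ ∣ Nr (f x + f y * β)) : ϖ ∣ x ∧ ϖ ∣ y := by
  obtain ⟨w, hw⟩ : f ϖ ∣ f x + f y * β := by
    rcases hϖ.dvd_or_dvd (by rw [← hNr]; exact map_dvd f h) with h | h
    · exact h
    · simpa [hσf, hσσ] using map_dvd σ h
  obtain ⟨a, b, rfl⟩ := hgen w
  obtain ⟨rfl, rfl⟩ := hind.eq_and_eq (show f x + f y * β = f (ϖ * a) + f (ϖ * b) * β by
    rw [hw, map_mul, map_mul]; ring)
  exact ⟨dvd_mul_right ϖ a, dvd_mul_right ϖ b⟩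

end QuadraticOrder

section Orders

variable {o O : Type*} [CommRing o] [CommRing O] {f : o →+* O} {σ : O →+* O} {Nr : O →* o}
  {ϖ : o}

theorem ordSet_add (f : o →+* O) (ϖ : o) (β : O) (r k : ℕ) :
    ordSet f ϖ β (r + k) = ordSet f ϖ (f (ϖ ^ r) * β) k := by
  ext z
  refine exists_congr fun x => exists_congr fun y => ?_
  rw [show f (ϖ ^ (r + k) * y) * β = f (ϖ ^ k * y) * (f (ϖ ^ r) * β) by
    simp only [pow_add, map_mul]; ring]

theorem ordUnits_add (f : o →+* O) (ϖ : o) (β : O) (r k : ℕ) :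
    ordUnits f ϖ β (r + k) = ordUnits f ϖ (f (ϖ ^ r) * β) k := by
  simp only [ordUnits, ordSet_add]

theorem unitIndex_eq_unitIndex_zero (f : o →+* O) (ϖ : o) (β : O) (r n : ℕ) :
    unitIndex f ϖ β r n = unitIndex f ϖ (f (ϖ ^ r) * β) 0 n := by
  rw [unitIndex, unitIndex, ← ordUnits_add, ← ordUnits_add, add_zero, zero_add]

theorem mem_ordSet_zero {γ z : O} : z ∈ ordSet f ϖ γ 0 ↔ ∃ x y, z = f x + f y * γ := by
  simp [ordSet]

variable {γ : O} {t : o}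

theorem mem_ordUnits_iff (hσf : ∀ x, σ (f x) = f x) (hNr : ∀ z, f (Nr z) = z * σ z)
    (hγ : σ γ = f t - γ) {k : ℕ} {z : O} :
    z ∈ ordUnits f ϖ γ k ↔ z ∈ ordSet f ϖ γ k ∧ IsUnit (Nr z) := by
  refine ⟨fun ⟨hz, w, _, hzw⟩ => ⟨hz, IsUnit.of_mul_eq_one (Nr w) ?_⟩, fun ⟨hz, hu⟩ => ⟨hz, ?_⟩⟩
  · rw [← map_mul, hzw, map_one]
  obtain ⟨x, y, rfl⟩ := hz
  set c : o := ↑hu.unit⁻¹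
  refine ⟨f ((x + t * (ϖ ^ k * y)) * c) + f (ϖ ^ k * -(y * c)) * γ, ⟨_, _, rfl⟩, ?_⟩
  have hw : f ((x + t * (ϖ ^ k * y)) * c) + f (ϖ ^ k * -(y * c)) * γ =
      σ (f x + f (ϖ ^ k * y) * γ) * f c := by
    rw [sigma_add_mul hσf hγ]
    simp only [map_add, map_mul, map_neg]
    ring
  rw [hw, ← mul_assoc, ← hNr, ← map_mul, hu.mul_val_inv, map_one]

theorem exists_ordUnits_mul_eq_iff_s7 [IsLocalRing o] (hf : Injective f)
    (hσf : ∀ x, σ (f x) = f x) (hNr : ∀ z, f (Nr z) = z * σ z) (hγ : σ γ = f t - γ)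
    (hind : IndepWithOne f γ) (hϖ : ¬IsUnit ϖ) {n : ℕ} (hn : n ≠ 0) {x y x' y' : o}
    (hz : IsUnit (Nr (f x + f y * γ))) (hz' : IsUnit (Nr (f x' + f y' * γ))) :
    (∃ u ∈ ordUnits f ϖ γ n, u * (f x + f y * γ) = f x' + f y' * γ) ↔
      ∃ a, IsUnit a ∧ ϖ ^ n ∣ a * x - x' ∧ ϖ ^ n ∣ a * y - y' := by
  constructor
  · rintro ⟨u, hu, hux⟩
    -- `u = a + ϖ ^ n b γ`, and `Nr u ≡ a²` modulo `ϖ ^ n`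
    obtain ⟨⟨a, b, rfl⟩, hu⟩ := (mem_ordUnits_iff hσf hNr hγ).1 hu
    rw [add_mul_mul_add_mul hNr hγ] at hux
    obtain ⟨rfl, rfl⟩ := hind.eq_and_eq hux
    refine ⟨a, ?_, ⟨Nr γ * b * y, by ring⟩, ⟨-(b * (x + t * y)), by ring⟩⟩
    rw [nr_add_mul hf hσf hNr hγ, show normForm t (Nr γ) (a, ϖ ^ n * b) =
      a * a + ϖ ^ n * (b * (t * a + Nr γ * ϖ ^ n * b)) by simp only [normForm]; ring] at hu
    rcases IsLocalRing.isUnit_or_isUnit_of_isUnit_add hu with h | h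
    · exact isUnit_of_mul_isUnit_left h
    · exact absurd ((isUnit_pow_iff hn).1 (isUnit_of_mul_isUnit_left h)) hϖ
  · rintro ⟨a, -, ⟨c, hc⟩, ⟨d, hd⟩⟩
    obtain rfl : x' = a * x - ϖ ^ n * c := by linear_combination -hc
    obtain rfl : y' = a * y - ϖ ^ n * d := by linear_combination -hd
    -- `u = z' z⁻¹ = z' σ(z) / Nr z`, whose `γ`-coordinate is `(x y' - x' y) / Nr z`
    set z := f x + f y * γ
    set z' := f (a * x - ϖ ^ n * c) + f (a * y - ϖ ^ n * d) * γ
    set e : o := ↑hz.unit⁻¹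
    have hu : z' * σ z * f e * z = z' := by
      rw [show z' * σ z * f e * z = z' * f (Nr z * e) by rw [map_mul, hNr]; ring,
        hz.mul_val_inv, map_one, mul_one]
    refine ⟨z' * σ z * f e, (mem_ordUnits_iff hσf hNr hγ).2 ⟨?_, ?_⟩, hu⟩
    · refine ⟨((a * x - ϖ ^ n * c) * (x + t * y) + Nr γ * (a * y - ϖ ^ n * d) * y) * e,
        (c * y - d * x) * e, ?_⟩
      rw [sigma_add_mul hσf hγ, add_mul_mul_add_mul hNr hγ]
      simp only [map_add, map_sub, map_mul, map_neg]
      ring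
    · refine isUnit_of_mul_isUnit_left (y := Nr z) ?_
      rwa [← map_mul, hu]

end Orders

section UnitIndex

variable {o O : Type*} [CommRing o] [IsDomain o] [IsDiscreteValuationRing o] [CommRing O]
  {f : o →+* O} {σ : O →+* O} {Nr : O →* o} {ϖ : o} {γ : O} {t : o}

theorem unitIndex_zero_eq_card_orbitRel (hf : Injective f) (hσf : ∀ x, σ (f x) = f x)
    (hNr : ∀ z, f (Nr z) = z * σ z) (hγ : σ γ = f t - γ) (hind : IndepWithOne f γ)
    (hϖ : Irreducible ϖ) {n : ℕ} (hn : n ≠ 0) :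
    unitIndex f ϖ γ 0 n = Nat.card (orbitRel.Quotient (o ⧸ Ideal.span {ϖ ^ n})ˣ
      (unitLocus (Ideal.Quotient.mk (Ideal.span {ϖ ^ n}) t)
        (Ideal.Quotient.mk (Ideal.span {ϖ ^ n}) (Nr γ)))) := by
  set ρ := Ideal.Quotient.mk (Ideal.span {ϖ ^ n})
  have hunit (x y : o) : IsUnit (normForm (ρ t) (ρ (Nr γ)) (ρ x, ρ y)) ↔
      IsUnit (Nr (f x + f y * γ)) := by
    rw [nr_add_mul hf hσf hNr hγ, ← hϖ.isUnit_mk_span_pow_iff hn, map_normForm]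
    rfl
  have hmem (x y : o) : f x + f y * γ ∈ ordUnits f ϖ γ 0 ↔ IsUnit (Nr (f x + f y * γ)) := by
    rw [mem_ordUnits_iff hσf hNr hγ, mem_ordSet_zero]
    exact and_iff_right ⟨x, y, rfl⟩
  choose X Y hXY using fun z : ordUnits f ϖ γ 0 => mem_ordSet_zero.1 z.2.1
  have hz (z : ordUnits f ϖ γ 0) : IsUnit (Nr (f (X z) + f (Y z) * γ)) := by
    rw [← hmem, ← hXY]
    exact z.2
  let c (z : ordUnits f ϖ γ 0) : unitLocus (ρ t) (ρ (Nr γ)) :=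
    ⟨(ρ (X z), ρ (Y z)), (hunit _ _).2 (hz z)⟩
  refine Nat.card_quot_eq_card_quotient_of_surjective _ (c := c) ?_ fun z z' => ?_
  · rintro ⟨⟨p₁, p₂⟩, hp⟩
    obtain ⟨x, rfl⟩ := Ideal.Quotient.mk_surjective p₁
    obtain ⟨y, rfl⟩ := Ideal.Quotient.mk_surjective p₂
    have hxy := (hmem x y).2 ((hunit x y).1 hp)
    obtain ⟨hx, hy⟩ := hind.eq_and_eq (hXY ⟨_, hxy⟩).symm
    exact ⟨⟨_, hxy⟩, by simp [c, hx, hy, ρ]⟩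
  · rw [Setoid.comm', orbitRel_apply, mem_orbit_iff]
    simp only [c, Subtype.ext_iff, SubMulAction.val_smul]
    rw [zero_add, hXY z, hXY z', exists_ordUnits_mul_eq_iff_s7 hf hσf hNr hγ hind hϖ.not_isUnit hn
      (hz z) (hz z')]
    exact (hϖ.exists_units_smul_mk_eq_iff hn _ _ _ _).symm

theorem unitIndex_zero_mul_card_sub_one (hf : Injective f) (hσf : ∀ x, σ (f x) = f x)
    (hNr : ∀ z, f (Nr z) = z * σ z) (hγ : σ γ = f t - γ) (hind : IndepWithOne f γ)
    (hϖ : Irreducible ϖ) [Finite (o ⧸ Ideal.span {ϖ})] {n : ℕ} (hn : n ≠ 0) :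
    unitIndex f ϖ γ 0 n * (Nat.card (o ⧸ Ideal.span {ϖ}) - 1) =
      Nat.card {w // normForm (Ideal.Quotient.mk (Ideal.span {ϖ}) t)
          (Ideal.Quotient.mk (Ideal.span {ϖ}) (Nr γ)) w ≠ 0} *
        Nat.card (o ⧸ Ideal.span {ϖ}) ^ (n - 1) := by
  have := hϖ.isLocalRing_quotient_span_pow hn
  let φ := Ideal.Quotient.factor (Ideal.span_singleton_pow_le ϖ hn)
  have hφ := Ideal.Quotient.factor_surjective (Ideal.span_singleton_pow_le ϖ hn)
  have hunit := hϖ.isUnit_iff_factor_ne_zero hn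
  have horbits := card_unitLocus (Ideal.Quotient.mk (Ideal.span {ϖ ^ n}) t)
    (Ideal.Quotient.mk (Ideal.span {ϖ ^ n}) (Nr γ))
  have hlocus := card_unitLocus_mul_card_sq φ hφ hunit
    (Ideal.Quotient.mk (Ideal.span {ϖ ^ n}) t) (Ideal.Quotient.mk (Ideal.span {ϖ ^ n}) (Nr γ))
  have hunits := card_units_mul_card φ hφ hunit
  rw [← unitIndex_zero_eq_card_orbitRel hf hσf hNr hγ hind hϖ hn] at horbits
  simp only [φ, Ideal.Quotient.factor_mk, hϖ.card_quotient_span_pow] at hlocus hunits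
  set q := Nat.card (o ⧸ Ideal.span {ϖ})
  set S := Nat.card {w // normForm (Ideal.Quotient.mk (Ideal.span {ϖ}) t)
    (Ideal.Quotient.mk (Ideal.span {ϖ}) (Nr γ)) w ≠ 0}
  obtain ⟨m, rfl⟩ := Nat.exists_eq_add_one_of_ne_zero hn
  have hq : 0 < q := Nat.card_pos
  refine Nat.eq_of_mul_eq_mul_right (show 0 < q ^ (m + 1) * q * q by positivity) ?_
  calc unitIndex f ϖ γ 0 (m + 1) * (q - 1) * (q ^ (m + 1) * q * q)
      = unitIndex f ϖ γ 0 (m + 1) * ((q - 1) * q ^ (m + 1)) * q * q := by ring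
    _ = unitIndex f ϖ γ 0 (m + 1) * Nat.card (o ⧸ Ideal.span {ϖ ^ (m + 1)})ˣ * (q * q) * q := by
      rw [← hunits]
      ring
    _ = S * (q ^ (m + 1) * q ^ (m + 1)) * q := by rw [← horbits, hlocus]
    _ = S * q ^ (m + 1 - 1) * (q ^ (m + 1) * q * q) := by rw [Nat.add_sub_cancel]; ring

end UnitIndex

section Ramification

variable {o O : Type*} [CommRing o] [IsDomain o] [IsDiscreteValuationRing o] [CommRing O]
  [IsDomain O] [IsDiscreteValuationRing O] {f : o →+* O} {σ : O →+* O} {Nr : O →* o}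
  {ϖ : o} {β : O}

theorem exists_not_isUnit_sub_map (hf : Injective f) (hσf : ∀ x, σ (f x) = f x)
    (hNr : ∀ z, f (Nr z) = z * σ z) (hgen : ∀ z, ∃ x y, z = f x + f y * β)
    (hϖ : Irreducible ϖ) (hram : ¬Irreducible (f ϖ)) : ∃ s, ¬IsUnit (β - f s) := by
  -- If the `β`-coordinate of a uniformizer `π` is a unit, `β` is congruent modulo `π` to some
  -- `f s`; otherwise both coordinates of `π` are divisible by `ϖ`, and `f ϖ` is a uniformizer.
  obtain ⟨π, hπ⟩ := IsDiscreteValuationRing.exists_irreducible O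
  have hπϖ : π ∣ f ϖ := by
    by_contra h
    exact hϖ.not_isUnit (isUnit_of_isUnit_map hf hσf hNr ((hπ.isUnit_iff_not_dvd _).2 h))
  obtain ⟨a, b, hab⟩ := hgen π
  by_cases hb : IsUnit b
  · refine ⟨-(a * ↑hb.unit⁻¹), fun h => hπ.not_isUnit ?_⟩
    refine isUnit_of_mul_isUnit_right (x := f ↑hb.unit⁻¹) ?_
    have hbb : f b * f ↑hb.unit⁻¹ = 1 := by rw [← map_mul, hb.mul_val_inv, map_one]
    rwa [show β - f (-(a * ↑hb.unit⁻¹)) = f ↑hb.unit⁻¹ * π by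
      rw [hab, map_neg, map_mul]; linear_combination (-β) * hbb] at h
  · exfalso
    obtain ⟨b, rfl⟩ : ϖ ∣ b := not_not.1 fun h => hb ((hϖ.isUnit_iff_not_dvd b).2 h)
    obtain ⟨a, rfl⟩ : ϖ ∣ a := by
      refine not_not.1 fun h => hπ.not_isUnit ?_
      refine isUnit_of_dvd_unit ?_ (((hϖ.isUnit_iff_not_dvd a).2 h).map f)
      rw [show f a = π - f ϖ * (f b * β) by rw [hab, map_mul]; ring]
      exact dvd_sub dvd_rfl (hπϖ.mul_right _)
    refine hram ((associated_of_dvd_dvd hπϖ ⟨f a + f b * β, ?_⟩).irreducible hπ)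
    rw [hab, map_mul, map_mul]
    ring

theorem dvd_sub_two_mul_and_dvd_sub_mul_self (hf : Injective f) (hσf : ∀ x, σ (f x) = f x)
    (hσσ : ∀ z, σ (σ z) = z) (hNr : ∀ z, f (Nr z) = z * σ z) {T : o} (hT : σ β = f T - β)
    (hϖ : Irreducible ϖ) {s : o} (hs : ¬IsUnit (β - f s)) :
    ϖ ∣ T - 2 * s ∧ ϖ ∣ Nr β - s * s := by
  -- `β - f s` and its conjugate are non-units, hence so are their sum `f (T - 2 s)` and their
  -- product `f (s² - T s + Nr β)`.
  have htr : ϖ ∣ T - 2 * s := by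
    refine not_not.1 fun h => ?_
    have hu := ((hϖ.isUnit_iff_not_dvd _).2 h).map f
    rw [show f (T - 2 * s) = (β - f s) + σ (β - f s) by
      rw [map_sub σ, hσf, hT]; simp only [map_sub, map_mul, map_ofNat]; ring] at hu
    rcases IsLocalRing.isUnit_or_isUnit_of_isUnit_add hu with h | h
    · exact hs h
    · exact hs (by simpa [hσσ] using h.map σ)
  have hnr : ϖ ∣ s * s - T * s + Nr β := by
    refine not_not.1 fun h => hs (isUnit_of_isUnit_nr hNr ?_)
    rw [show β - f s = f (-s) + f 1 * β by rw [map_neg, map_one]; ring,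
      nr_add_mul hf hσf hNr hT, show normForm T (Nr β) (-s, 1) = s * s - T * s + Nr β by
        simp only [normForm]; ring]
    exact (hϖ.isUnit_iff_not_dvd _).2 h
  exact ⟨htr, by convert dvd_add hnr (htr.mul_left s) using 1; ring⟩

end Ramification

section Residue

variable {o O : Type*} [CommRing o] [CommRing O] [IsDomain O] [IsDiscreteValuationRing O]
  {f : o →+* O} {σ : O →+* O} {Nr : O →* o} {ϖ : o} {β : O} {T : o}

theorem exists_mk_eq_two_mul_and_mk_eq_mul_self [IsDomain o] [IsDiscreteValuationRing o]
    (hf : Injective f) (hσf : ∀ x, σ (f x) = f x) (hσσ : ∀ z, σ (σ z) = z)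
    (hNr : ∀ z, f (Nr z) = z * σ z) (hgen : ∀ z, ∃ x y, z = f x + f y * β) (hT : σ β = f T - β)
    (hϖ : Irreducible ϖ) {r : ℕ} (h : 0 < r ∨ ¬Irreducible (f ϖ)) :
    ∃ s, Ideal.Quotient.mk (Ideal.span {ϖ}) (ϖ ^ r * T) = 2 * s ∧
      Ideal.Quotient.mk (Ideal.span {ϖ}) (Nr (f (ϖ ^ r) * β)) = s * s := by
  have hmk (a b : o) (hab : ϖ ∣ a - b) :
      Ideal.Quotient.mk (Ideal.span {ϖ}) a = Ideal.Quotient.mk (Ideal.span {ϖ}) b :=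
    Ideal.Quotient.eq.2 (Ideal.mem_span_singleton.2 hab)
  rw [map_mul Nr, nr_map hf hσf hNr]
  rcases Nat.eq_zero_or_pos r with rfl | hr
  · obtain ⟨s, hs⟩ := exists_not_isUnit_sub_map hf hσf hNr hgen hϖ (h.resolve_left (lt_irrefl 0))
    obtain ⟨h₁, h₂⟩ := dvd_sub_two_mul_and_dvd_sub_mul_self hf hσf hσσ hNr hT hϖ hs
    exact ⟨_, by simpa [map_ofNat] using hmk _ _ h₁, by simpa using hmk _ _ h₂⟩
  · have hϖr : ϖ ∣ ϖ ^ r := dvd_pow_self ϖ hr.ne'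
    refine ⟨0, by simpa using hmk (ϖ ^ r * T) 0 (by simpa using hϖr.mul_right T), ?_⟩
    simpa using hmk (ϖ ^ r * ϖ ^ r * Nr β) 0 (by simpa using (hϖr.mul_right _).mul_right _)

theorem eq_zero_of_normForm_mk_eq_zero (hf : Injective f) (hσf : ∀ x, σ (f x) = f x)
    (hσσ : ∀ z, σ (σ z) = z) (hNr : ∀ z, f (Nr z) = z * σ z)
    (hgen : ∀ z, ∃ x y, z = f x + f y * β) (hind : IndepWithOne f β) (hT : σ β = f T - β)
    (hunr : Irreducible (f ϖ)) (w : (o ⧸ Ideal.span {ϖ}) × (o ⧸ Ideal.span {ϖ}))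
    (hw : normForm (Ideal.Quotient.mk _ T) (Ideal.Quotient.mk _ (Nr β)) w = 0) : w = 0 := by
  obtain ⟨w₁, w₂⟩ := w
  obtain ⟨x, rfl⟩ := Ideal.Quotient.mk_surjective w₁
  obtain ⟨y, rfl⟩ := Ideal.Quotient.mk_surjective w₂
  rw [← Prod.map_apply, ← map_normForm, ← nr_add_mul hf hσf hNr hT,
    Ideal.Quotient.eq_zero_iff_mem, Ideal.mem_span_singleton] at hw
  obtain ⟨hx, hy⟩ := dvd_and_dvd_of_dvd_nr hσf hσσ hNr hgen hind hunr.prime hw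
  simp [Ideal.Quotient.eq_zero_iff_mem, Ideal.mem_span_singleton, hx, hy]

end Residue

theorem stmt_7_general {o O : Type*} [CommRing o] [IsDomain o] [IsDiscreteValuationRing o]
    [CommRing O] [IsDomain O] [IsDiscreteValuationRing O]
    (f : o →+* O) (hf : Function.Injective f)
    (ϖ : o) (hϖ : Irreducible ϖ)
    (q : ℕ) (hfin : Finite (o ⧸ Ideal.span ({ϖ} : Set o)))
    (hq : Nat.card (o ⧸ Ideal.span ({ϖ} : Set o)) = q)
    (β : O) (hβ : β ∉ Set.range f)
    (hgen : ∀ z : O, ∃ x y : o, z = f x + f y * β)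
    (σ : O →+* O) (hσf : ∀ x : o, σ (f x) = f x) (hσσ : ∀ z : O, σ (σ z) = z)
    (Nr : O →* o) (hNr : ∀ z : O, f (Nr z) = z * σ z)
    (r n : ℕ) (hn : 1 ≤ n) :
    ((0 < r ∨ ¬ Irreducible (f ϖ)) → unitIndex f ϖ β r n = q ^ n) ∧
    ((r = 0 ∧ Irreducible (f ϖ)) → unitIndex f ϖ β r n = q ^ n + q ^ (n - 1)) := by
  obtain ⟨T, hT⟩ := exists_sigma_eq_sub hNr β
  have hind := indepWithOne_of_notMem_range hf hσf hNr hβ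
  have hγ : σ (f (ϖ ^ r) * β) = f (ϖ ^ r * T) - f (ϖ ^ r) * β := by
    rw [map_mul, hσf, hT, map_mul]
    ring
  have := (Ideal.span_singleton_prime hϖ.ne_zero).2 hϖ.prime
  have hq1 : 1 < q := hq ▸ Finite.one_lt_card
  have key := unitIndex_zero_mul_card_sub_one hf hσf hNr hγ
    (hind.map_mul_left (pow_ne_zero r hϖ.ne_zero)) hϖ (n := n) (by omega)
  rw [← unitIndex_eq_unitIndex_zero, hq] at key
  obtain ⟨p, rfl⟩ : ∃ p, q = p + 1 := ⟨q - 1, by omega⟩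
  obtain ⟨m, rfl⟩ : ∃ m, n = m + 1 := ⟨n - 1, by omega⟩
  simp only [Nat.add_sub_cancel] at key ⊢
  constructor
  · intro h
    obtain ⟨s, hts, hms⟩ := exists_mk_eq_two_mul_and_mk_eq_mul_self hf hσf hσσ hNr hgen hT hϖ h
    rw [hts, hms, card_normForm_ne_zero_of_square, hq, Nat.add_sub_cancel] at key
    exact Nat.eq_of_mul_eq_mul_right (by omega : 0 < p) (by rw [key]; ring)
  · rintro ⟨rfl, hunr⟩
    simp only [pow_zero, one_mul, map_one] at key
    rw [card_normForm_ne_zero_of_anisotropic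
      (eq_zero_of_normForm_mk_eq_zero hf hσf hσσ hNr hgen hind hT hunr), hq,
      Nat.sub_eq_of_eq_add (show (p + 1) * (p + 1) = p * (p + 2) + 1 by ring)] at key
    exact Nat.eq_of_mul_eq_mul_right (by omega : 0 < p) (by rw [key]; ring)

/-- For every `r ∈ ℕ` and every integer `n ≥ 1`, the index of unit
groups satisfies `[𝒪_r^× : 𝒪_{r+n}^×] = q^n` if `r > 0` or `E/F` is ramified, and
`[𝒪_r^× : 𝒪_{r+n}^×] = q^n(1 + q^{−1}) = q^n + q^{n−1}` if `r = 0` and `E/F` is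
unramified. -/
theorem stmt_7 {o O : Type*} [CommRing o] [IsDomain o] [IsDiscreteValuationRing o]
    [CommRing O] [IsDomain O] [IsDiscreteValuationRing O]
    (f : o →+* O) (hf : Function.Injective f)
    (ϖ : o) (hϖ : Irreducible ϖ)
    (q : ℕ) (hfin : Finite (o ⧸ Ideal.span ({ϖ} : Set o)))
    (hq : Nat.card (o ⧸ Ideal.span ({ϖ} : Set o)) = q)
    (β : O) (hβ : β ∉ Set.range f)
    (hgen : ∀ z : O, ∃ x y : o, z = f x + f y * β)
    (σ : O →+* O) (hσf : ∀ x : o, σ (f x) = f x) (hσσ : ∀ z : O, σ (σ z) = z)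
    (Nr : O →* o) (hNr : ∀ z : O, f (Nr z) = z * σ z)
    (hβunit : IsUnit (Nr β))
    (r n : ℕ) (hn : 1 ≤ n) :
    ((0 < r ∨ ¬ Irreducible (f ϖ)) → unitIndex f ϖ β r n = q ^ n) ∧
    ((r = 0 ∧ Irreducible (f ϖ)) → unitIndex f ϖ β r n = q ^ n + q ^ (n - 1)) :=
  stmt_7_general f hf ϖ hϖ q hfin hq β hβ hgen σ hσf hσσ Nr hNr r n hn
end
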